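/- arXiv:1608.01946 — 3 statements merged into one kernel-verified Lean document; each statement's English description precedes it below -/
import Mathlib

section
/- Combining contexts lemma: Let P be a program and S = {⟨C₁,a₁⟩,...,⟨Cₙ,aₙ⟩} a set of pairs of programs and fresh pairwise-distinct atoms not occurring in P or any Cᵢ. Then the answer sets of P together with the choice rule '1{a₁,...,aₙ}1.' and the programs append(Cᵢ, aᵢ) are exactly the sets A ∪ {aᵢ} for A an answer set of P ∪ Cᵢ, over all i. -/
/-- A propositional normal rule: `head :- pos, not neg`. -/
structure Rule (α : Type*) where
  head : α
  pos : Set α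
  neg : Set α

/-- `J` is closed under the Gelfond–Lifschitz reduct of `P` with respect to `I`:
for every rule whose negative body is disjoint from `I`, if the positive body is
contained in `J` then the head is in `J`. -/
def ClosedReduct {α : Type*} (P : Set (Rule α)) (I J : Set α) : Prop :=
  ∀ r ∈ P, r.neg ∩ I = ∅ → r.pos ⊆ J → r.head ∈ J

/-- `I` is an answer set (stable model) of `P`: `I` is the least model of the
Gelfond–Lifschitz reduct of `P` with respect to `I`. -/
def AnswerSet {α : Type*} (P : Set (Rule α)) (I : Set α) : Prop :=
  I = ⋂₀ {J | ClosedReduct P I J}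

/-- `appendAtom C a` adds the atom `a` to the (positive) body of every rule of `C`. -/
def appendAtom {α : Type*} (C : Set (Rule α)) (a : α) : Set (Rule α) :=
  (fun r => ⟨r.head, insert a r.pos, r.neg⟩) '' C

/-- The atom `a` occurs in the rule `r`. -/
def OccursIn {α : Type*} (a : α) (r : Rule α) : Prop :=
  r.head = a ∨ a ∈ r.pos ∨ a ∈ r.neg
/-- A normal-program encoding of the choice rule `1 {a 0, ..., a (n-1)} 1.`,
forcing exactly one of the (pairwise distinct) atoms `a i` to hold:
the rules `a i :- not a j` for all `j ≠ i`. -/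
def choiceOne {α : Type*} {n : ℕ} (a : Fin n → α) : Set (Rule α) :=
  ⋃ i : Fin n, {⟨a i, ∅, {x | ∃ j : Fin n, j ≠ i ∧ x = a j}⟩}

/-- Characterization of answer sets: `I` is closed and least among closed sets. -/
lemma answerSet_iff {α : Type*} {P : Set (Rule α)} {I : Set α} :
    AnswerSet P I ↔ ClosedReduct P I I ∧ ∀ J, ClosedReduct P I J → I ⊆ J := by
  constructor
  · intro h
    have hle : I ⊆ ⋂₀ {J | ClosedReduct P I J} := h.le
    have hge : ⋂₀ {J | ClosedReduct P I J} ⊆ I := h.ge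
    constructor
    · intro r hr hneg hpos
      refine hge ?_
      rw [Set.mem_sInter]
      intro J hJ
      exact hJ r hr hneg (fun x hx => Set.mem_sInter.1 (hle (hpos hx)) J hJ)
    · intro J hJ
      exact hle.trans (Set.sInter_subset_of_mem hJ)
  · rintro ⟨hc, hl⟩
    exact Set.Subset.antisymm (Set.subset_sInter fun J hJ => hl J hJ)
      (Set.sInter_subset_of_mem hc)

/-- Combining contexts lemma: for a program `P` and pairs `⟨C i, a i⟩` of context
programs and fresh pairwise-distinct atoms not occurring in `P` or any `C j`, the
answer sets of `P` together with the choice rule `1{a 0,...,a (n-1)}1.` and the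
programs `append(C i, a i)` are exactly the sets `A ∪ {a i}` for `A` an answer set
of `P ∪ C i`, over all `i`. -/
theorem answerSet_combine_contexts {α : Type*} {n : ℕ} (hn : 0 < n)
    (P : Set (Rule α)) (C : Fin n → Set (Rule α)) (a : Fin n → α)
    (hinj : Function.Injective a)
    (hP : ∀ i, ∀ r ∈ P, ¬ OccursIn (a i) r)
    (hC : ∀ i j, ∀ r ∈ C j, ¬ OccursIn (a i) r) :
    ∀ I : Set α,
      AnswerSet (P ∪ choiceOne a ∪ ⋃ i : Fin n, appendAtom (C i) (a i)) I ↔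
      ∃ (i : Fin n) (A : Set α), AnswerSet (P ∪ C i) A ∧ I = A ∪ {a i} := by
  -- notation and basic facts
  set Q : Set (Rule α) := P ∪ choiceOne a ∪ ⋃ i : Fin n, appendAtom (C i) (a i) with hQdef
  have hPfresh : ∀ j, ∀ r ∈ P, r.head ≠ a j ∧ a j ∉ r.pos ∧ a j ∉ r.neg := by
    intro j r hr
    have := hP j r hr
    simp only [OccursIn, not_or] at this
    exact this
  have hCfresh : ∀ j k, ∀ r ∈ C k, r.head ≠ a j ∧ a j ∉ r.pos ∧ a j ∉ r.neg := by
    intro j k r hr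
    have := hC j k r hr
    simp only [OccursIn, not_or] at this
    exact this
  have hPQ : P ⊆ Q := fun r hr => Or.inl (Or.inl hr)
  have hchQ : ∀ k : Fin n,
      (⟨a k, ∅, {x | ∃ j : Fin n, j ≠ k ∧ x = a j}⟩ : Rule α) ∈ Q := by
    intro k
    exact Or.inl (Or.inr (Set.mem_iUnion.2 ⟨k, rfl⟩))
  have hliftQ : ∀ k : Fin n, ∀ s ∈ C k,
      (⟨s.head, insert (a k) s.pos, s.neg⟩ : Rule α) ∈ Q := by
    intro k s hs
    exact Or.inr (Set.mem_iUnion.2 ⟨k, ⟨s, hs, rfl⟩⟩)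
  have memQ : ∀ r ∈ Q, r ∈ P ∨
      (∃ k : Fin n, r = ⟨a k, ∅, {x | ∃ j : Fin n, j ≠ k ∧ x = a j}⟩) ∨
      (∃ k : Fin n, ∃ s ∈ C k, r = ⟨s.head, insert (a k) s.pos, s.neg⟩) := by
    rintro r ((hr | hr) | hr)
    · exact Or.inl hr
    · rcases Set.mem_iUnion.1 hr with ⟨k, hk⟩
      exact Or.inr (Or.inl ⟨k, hk⟩)
    · rcases Set.mem_iUnion.1 hr with ⟨k, hk⟩
      rcases hk with ⟨s, hs, heq⟩
      exact Or.inr (Or.inr ⟨k, s, hs, heq.symm⟩)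
  intro I
  constructor
  · -- forward direction
    intro hI
    rw [answerSet_iff] at hI
    obtain ⟨hIc, hIl⟩ := hI
    -- some a i is in I
    have hex : ∃ k : Fin n, a k ∈ I := by
      by_contra hno
      push_neg at hno
      obtain ⟨k⟩ := Fin.pos_iff_nonempty.mp hn
      have hneg : ({x | ∃ j : Fin n, j ≠ k ∧ x = a j} : Set α) ∩ I = ∅ := by
        ext x
        simp only [Set.mem_inter_iff, Set.mem_empty_iff_false, iff_false, not_and,
          Set.mem_setOf_eq]
        rintro ⟨j, hj, rfl⟩
        exact hno j
      have := hIc _ (hchQ k) hneg (by intro x hx; exact absurd hx (Set.notMem_empty x))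
      exact hno k this
    obtain ⟨i, hai⟩ := hex
    -- a j ∉ I for j ≠ i
    have huniq : ∀ j, j ≠ i → a j ∉ I := by
      intro j hj haj
      have hJ : ClosedReduct Q I (I \ {a j}) := by
        intro r hr hneg hpos
        rcases memQ r hr with hrP | ⟨k, rfl⟩ | ⟨k, s, hs, rfl⟩
        · exact ⟨hIc r (hPQ hrP) hneg (hpos.trans Set.diff_subset),
            (hPfresh j r hrP).1⟩
        · exfalso
          by_cases hik : i = k
          · have hx : a j ∈ ({x | ∃ m : Fin n, m ≠ k ∧ x = a m} : Set α) ∩ I :=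
              ⟨⟨j, by rw [← hik]; exact hj, rfl⟩, haj⟩
            rw [hneg] at hx
            exact hx
          · have hx : a i ∈ ({x | ∃ m : Fin n, m ≠ k ∧ x = a m} : Set α) ∩ I :=
              ⟨⟨i, hik, rfl⟩, hai⟩
            rw [hneg] at hx
            exact hx
        · exact ⟨hIc _ (hliftQ k s hs) hneg (hpos.trans Set.diff_subset),
            (hCfresh j k s hs).1⟩
      exact (hIl _ hJ haj).2 rfl
    refine ⟨i, I \ {a i}, ?_, ?_⟩
    · rw [answerSet_iff]
      constructor
      · -- I \ {a i} is closed under reduct of P ∪ C i wrt itself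
        intro r hr hneg hpos
        have hnegI : r.neg ∩ I = ∅ := by
          ext x
          simp only [Set.mem_inter_iff, Set.mem_empty_iff_false, iff_false, not_and]
          intro hxneg hxI
          have hxne : x ≠ a i := by
            rintro rfl
            rcases hr with h | h
            · exact (hPfresh i r h).2.2 hxneg
            · exact (hCfresh i i r h).2.2 hxneg
          have hx : x ∈ r.neg ∩ (I \ {a i}) := ⟨hxneg, hxI, hxne⟩
          rw [hneg] at hx
          exact hx
        rcases hr with hrP | hrC
        · exact ⟨hIc r (hPQ hrP) hnegI (hpos.trans Set.diff_subset),
            (hPfresh i r hrP).1⟩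
        · refine ⟨?_, (hCfresh i i r hrC).1⟩
          have hsub : insert (a i) r.pos ⊆ I := by
            intro x hx
            rcases Set.mem_insert_iff.1 hx with rfl | hx
            · exact hai
            · exact (hpos hx).1
          exact hIc ⟨r.head, insert (a i) r.pos, r.neg⟩ (hliftQ i r hrC) hnegI hsub
      · -- minimality
        intro K hK
        have hK'closed : ClosedReduct Q I ({x ∈ K | ∀ j, x ≠ a j} ∪ {a i}) := by
          intro r hr hneg hpos
          rcases memQ r hr with hrP | ⟨k, rfl⟩ | ⟨k, s, hs, rfl⟩
          · have hposK : r.pos ⊆ K := by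
              intro x hx
              rcases hpos hx with ⟨hxK, _⟩ | hxa
              · exact hxK
              · rw [Set.mem_singleton_iff] at hxa
                subst hxa
                exact absurd hx (hPfresh i r hrP).2.1
            have hnegA : r.neg ∩ (I \ {a i}) = ∅ :=
              Set.eq_empty_of_subset_empty
                (by rw [← hneg]; exact Set.inter_subset_inter_right _ Set.diff_subset)
            exact Or.inl ⟨hK r (Or.inl hrP) hnegA hposK, fun j => (hPfresh j r hrP).1⟩
          · have hk : k = i := by
              by_contra hk
              have hx : a i ∈ ({x | ∃ m : Fin n, m ≠ k ∧ x = a m} : Set α) ∩ I :=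
                ⟨⟨i, fun h => hk (h.symm), rfl⟩, hai⟩
              rw [hneg] at hx
              exact hx
            subst hk
            exact Or.inr rfl
          · have hk : k = i := by
              have hx : a k ∈ {x ∈ K | ∀ j, x ≠ a j} ∪ {a i} :=
                hpos (Set.mem_insert _ _)
              rcases hx with ⟨_, hne⟩ | h
              · exact absurd rfl (hne k)
              · exact hinj (Set.mem_singleton_iff.1 h)
            subst hk
            have hposK : s.pos ⊆ K := by
              intro x hx
              rcases hpos (Set.mem_insert_of_mem _ hx) with ⟨hxK, _⟩ | hxa
              · exact hxK
              · rw [Set.mem_singleton_iff] at hxa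
                subst hxa
                exact absurd hx (hCfresh k k s hs).2.1
            have hnegA : s.neg ∩ (I \ {a k}) = ∅ :=
              Set.eq_empty_of_subset_empty
                (by rw [← hneg]; exact Set.inter_subset_inter_right _ Set.diff_subset)
            exact Or.inl ⟨hK s (Or.inr hs) hnegA hposK, fun j => (hCfresh j k s hs).1⟩
        have hIK' : I ⊆ {x ∈ K | ∀ j, x ≠ a j} ∪ {a i} := hIl _ hK'closed
        intro x hx
        rcases hIK' hx.1 with ⟨hxK, _⟩ | hxa
        · exact hxK
        · exact absurd hxa hx.2
    · exact (Set.diff_union_of_subset (Set.singleton_subset_iff.2 hai)).symm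
  · -- backward direction
    rintro ⟨i, A, hA, rfl⟩
    rw [answerSet_iff] at hA ⊢
    obtain ⟨hAc, hAl⟩ := hA
    have hfreshA : ∀ j, a j ∉ A := by
      intro j haj
      have hJ : ClosedReduct (P ∪ C i) A {x ∈ A | ∀ m, x ≠ a m} := by
        intro r hr hneg hpos
        refine ⟨hAc r hr hneg (hpos.trans (Set.sep_subset _ _)), ?_⟩
        intro m
        rcases hr with h | h
        · exact (hPfresh m r h).1
        · exact (hCfresh m i r h).1
      exact (hAl _ hJ haj).2 j rfl
    have haiI : a i ∈ A ∪ {a i} := Or.inr rfl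
    constructor
    · -- A ∪ {a i} is closed
      intro r hr hneg hpos
      rcases memQ r hr with hrP | ⟨k, rfl⟩ | ⟨k, s, hs, rfl⟩
      · have hposA : r.pos ⊆ A := by
          intro x hx
          rcases hpos hx with h | h
          · exact h
          · rw [Set.mem_singleton_iff] at h
            subst h
            exact absurd hx (hPfresh i r hrP).2.1
        have hnegA : r.neg ∩ A = ∅ :=
          Set.eq_empty_of_subset_empty
            (by rw [← hneg]; exact Set.inter_subset_inter_right _ Set.subset_union_left)
        exact Or.inl (hAc r (Or.inl hrP) hnegA hposA)
      · have hk : k = i := by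
          by_contra hk
          have hx : a i ∈ ({x | ∃ m : Fin n, m ≠ k ∧ x = a m} : Set α) ∩ (A ∪ {a i}) :=
            ⟨⟨i, fun h => hk h.symm, rfl⟩, haiI⟩
          rw [hneg] at hx
          exact hx
        subst hk
        exact haiI
      · have hk : k = i := by
          have hx : a k ∈ A ∪ {a i} := hpos (Set.mem_insert _ _)
          rcases hx with h | h
          · exact absurd h (hfreshA k)
          · exact hinj (Set.mem_singleton_iff.1 h)
        subst hk
        have hposA : s.pos ⊆ A := by
          intro x hx
          rcases hpos (Set.mem_insert_of_mem _ hx) with h | h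
          · exact h
          · rw [Set.mem_singleton_iff] at h
            subst h
            exact absurd hx (hCfresh k k s hs).2.1
        have hnegA : s.neg ∩ A = ∅ :=
          Set.eq_empty_of_subset_empty
            (by rw [← hneg]; exact Set.inter_subset_inter_right _ Set.subset_union_left)
        exact Or.inl (hAc s (Or.inr hs) hnegA hposA)
    · -- minimality
      intro J hJ
      have haiJ : a i ∈ J := by
        have hneg : ({x | ∃ j : Fin n, j ≠ i ∧ x = a j} : Set α) ∩ (A ∪ {a i}) = ∅ := by
          ext x
          simp only [Set.mem_inter_iff, Set.mem_empty_iff_false, iff_false, not_and,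
            Set.mem_setOf_eq]
          rintro ⟨j, hj, rfl⟩ hxI
          rcases hxI with h | h
          · exact hfreshA j h
          · exact hj (hinj (Set.mem_singleton_iff.1 h))
        exact hJ _ (hchQ i) hneg (fun x hx => absurd hx (Set.notMem_empty x))
      have hAJ : A ⊆ J := by
        apply hAl
        intro r hr hneg hpos
        have hnegI : r.neg ∩ (A ∪ {a i}) = ∅ := by
          ext x
          simp only [Set.mem_inter_iff, Set.mem_empty_iff_false, iff_false, not_and]
          intro hxneg hxI
          rcases hxI with h | h
          · have hx : x ∈ r.neg ∩ A := ⟨hxneg, h⟩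
            rw [hneg] at hx
            exact hx
          · rw [Set.mem_singleton_iff] at h
            subst h
            rcases hr with h' | h'
            · exact (hPfresh i r h').2.2 hxneg
            · exact (hCfresh i i r h').2.2 hxneg
        rcases hr with hrP | hrC
        · exact hJ r (hPQ hrP) hnegI hpos
        · exact hJ ⟨r.head, insert (a i) r.pos, r.neg⟩ (hliftQ i r hrC) hnegI
            (Set.insert_subset haiJ hpos)
      exact Set.union_subset hAJ (Set.singleton_subset_iff.2 haiJ)
end

section
/- For n = 1, the context-combination construction is sound: if a is an atom not occurring in program P or program C, then the answer sets of P ∪ {a.} ∪ append(C, a) are exactly the sets A ∪ {a} for A an answer set of P ∪ C. -/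
lemma closedReduct_sInter {α : Type*} (P : Set (Rule α)) (I : Set α) :
    ClosedReduct P I (⋂₀ {J | ClosedReduct P I J}) := by
  intro r hr hneg hpos J hJ
  exact hJ r hr hneg (fun x hx => hpos hx J hJ)

lemma a_notMem_M {α : Type*} (P C : Set (Rule α)) (a : α)
    (hP : ∀ r ∈ P, ¬ OccursIn a r) (hC : ∀ r ∈ C, ¬ OccursIn a r) (A : Set α) :
    a ∉ ⋂₀ {J | ClosedReduct (P ∪ C) A J} := by
  intro h
  have hcl : ClosedReduct (P ∪ C) A ({a}ᶜ) := by
    intro r hr _ _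
    have : ¬ OccursIn a r := by
      rcases hr with hr | hr
      · exact hP r hr
      · exact hC r hr
    simp only [Set.mem_compl_iff, Set.mem_singleton_iff]
    intro he
    exact this (Or.inl he)
  exact (h _ hcl) rfl

lemma neg_disj {α : Type*} {r : Rule α} {a : α} (hna : a ∉ r.neg) (I : Set α) :
    r.neg ∩ (I \ {a}) = ∅ ↔ r.neg ∩ I = ∅ := by
  constructor
  · intro h
    ext x
    simp only [Set.mem_inter_iff, Set.mem_empty_iff_false, iff_false, not_and]
    intro hx hxI
    have hn : x ∉ r.neg ∩ (I \ {a}) := by rw [h]; exact Set.notMem_empty x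
    exact hn ⟨hx, hxI, fun he => hna (he ▸ hx)⟩
  · intro h
    ext x
    simp only [Set.mem_inter_iff, Set.mem_empty_iff_false, iff_false, not_and]
    intro hx hxI
    have hn : x ∉ r.neg ∩ I := by rw [h]; exact Set.notMem_empty x
    exact hn ⟨hx, hxI.1⟩

lemma M_eq {α : Type*} (P C : Set (Rule α)) (a : α)
    (hP : ∀ r ∈ P, ¬ OccursIn a r) (hC : ∀ r ∈ C, ¬ OccursIn a r) (I : Set α) :
    ⋂₀ {J | ClosedReduct (P ∪ {⟨a, ∅, ∅⟩} ∪ appendAtom C a) I J}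
      = (⋂₀ {J | ClosedReduct (P ∪ C) (I \ {a}) J}) ∪ {a} := by
  set Q := P ∪ {(⟨a, ∅, ∅⟩ : Rule α)} ∪ appendAtom C a with hQ
  set A := I \ {a} with hA
  set M := ⋂₀ {J | ClosedReduct (P ∪ C) A J} with hM
  have hMQ := closedReduct_sInter Q I
  have haQ : a ∈ ⋂₀ {J | ClosedReduct Q I J} := by
    intro J hJ
    have := hJ ⟨a, ∅, ∅⟩ (Or.inl (Or.inr rfl)) (by simp) (by simp)
    exact this
  apply Set.Subset.antisymm
  · -- M ∪ {a} is closed under reduct of Q wrt I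
    apply Set.sInter_subset_of_mem
    intro r hr hneg hpos
    rcases hr with (hrP | hrf) | hrC
    · have hocc := hP r hrP
      have hpos' : r.pos ⊆ M := by
        intro x hx
        rcases hpos hx with hxM | hxa
        · exact hxM
        · exact absurd ((Set.mem_singleton_iff.mp hxa) ▸ hx)
            (fun h => hocc (Or.inr (Or.inl h)))
      have hneg' : r.neg ∩ A = ∅ := by
        apply Set.eq_empty_iff_forall_notMem.mpr
        intro x hx
        exact Set.eq_empty_iff_forall_notMem.mp hneg x ⟨hx.1, hx.2.1⟩
      exact Or.inl (closedReduct_sInter (P ∪ C) A r (Or.inl hrP) hneg' hpos')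
    · rw [Set.mem_singleton_iff.mp hrf]
      exact Or.inr rfl
    · rcases hrC with ⟨s, hs, rfl⟩
      have hocc := hC s hs
      have hpos' : s.pos ⊆ M := by
        intro x hx
        rcases hpos (Set.mem_insert_of_mem a hx) with hxM | hxa
        · exact hxM
        · exact absurd ((Set.mem_singleton_iff.mp hxa) ▸ hx)
            (fun h => hocc (Or.inr (Or.inl h)))
      have hneg' : s.neg ∩ A = ∅ := by
        apply Set.eq_empty_iff_forall_notMem.mpr
        intro x hx
        exact Set.eq_empty_iff_forall_notMem.mp hneg x ⟨hx.1, hx.2.1⟩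
      exact Or.inl (closedReduct_sInter (P ∪ C) A s (Or.inr hs) hneg' hpos')
  · apply Set.union_subset
    · -- M ⊆ M(Q,I): M(Q,I) is closed under reduct of P ∪ C wrt A
      apply Set.sInter_subset_of_mem
      intro r hr hneg hpos
      have hocc : ¬ OccursIn a r := by
        rcases hr with h | h
        · exact hP r h
        · exact hC r h
      have hna : a ∉ r.neg := fun h => hocc (Or.inr (Or.inr h))
      have hnegI : r.neg ∩ I = ∅ := ((neg_disj hna I).mp hneg)
      rcases hr with hrP | hrC
      · exact hMQ r (Or.inl (Or.inl hrP)) hnegI hpos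
      · refine hMQ ⟨r.head, insert a r.pos, r.neg⟩ (Or.inr ⟨r, hrC, rfl⟩) hnegI ?_
        exact Set.insert_subset haQ hpos
    · intro x hx
      rw [Set.mem_singleton_iff.mp hx]
      exact haQ

/-- If `a` is an atom not occurring in `P` or `C`, then the answer sets of
`P ∪ {a.} ∪ append(C, a)` are exactly the sets `A ∪ {a}` for `A` an answer set of
`P ∪ C`. -/
theorem answerSet_append_singleton {α : Type*} (P C : Set (Rule α)) (a : α)
    (hP : ∀ r ∈ P, ¬ OccursIn a r) (hC : ∀ r ∈ C, ¬ OccursIn a r) :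
    ∀ I : Set α,
      AnswerSet (P ∪ {⟨a, ∅, ∅⟩} ∪ appendAtom C a) I ↔
      ∃ A : Set α, AnswerSet (P ∪ C) A ∧ I = A ∪ {a} := by
  intro I
  constructor
  · intro hI
    rw [AnswerSet, M_eq P C a hP hC I] at hI
    have hnot := a_notMem_M P C a hP hC (I \ {a})
    have hdiff : I \ {a} = ⋂₀ {J | ClosedReduct (P ∪ C) (I \ {a}) J} := by
      conv_lhs => rw [hI]
      rw [Set.union_diff_distrib, Set.diff_self, Set.union_empty,
        Set.diff_singleton_eq_self hnot]
    refine ⟨I \ {a}, hdiff, ?_⟩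
    conv_lhs => rw [hI]
    rw [← hdiff]
  · rintro ⟨A, hAset, rfl⟩
    have hnot : a ∉ A := by
      rw [AnswerSet] at hAset
      rw [hAset]
      exact a_notMem_M P C a hP hC A
    have hdiff : (A ∪ {a}) \ {a} = A := by
      rw [Set.union_diff_distrib, Set.diff_self, Set.union_empty,
        Set.diff_singleton_eq_self hnot]
    rw [AnswerSet, M_eq P C a hP hC, hdiff, ← hAset]
end

section
/- Correctness of the translation from context-dependent to ordinary learning tasks: a hypothesis H is an inductive solution of a context-dependent learning-from-ordered-answer-sets task T if and only if H is an inductive solution of the translated task 𝒯_LOAS(T). -/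
/-- A partial interpretation: a pair of sets of atoms (inclusions and exclusions). -/
structure PInterp (α : Type*) where
  inc : Set α
  exc : Set α

/-- An answer set `A` extends a partial interpretation `e` iff `e.inc ⊆ A` and
`e.exc ∩ A = ∅`. -/
def Extends {α : Type*} (A : Set α) (e : PInterp α) : Prop :=
  e.inc ⊆ A ∧ e.exc ∩ A = ∅

/-- Correctness of the translation 𝒯_LOAS from context-dependent to ordinary
learning-from-ordered-answer-sets tasks (for a fixed hypothesis `H`, stated
abstractly): `H` is an inductive solution of the context-dependent task iff it is
an inductive solution of the translated task.

Here `ι` indexes the (context-dependent) examples; `AS e` is the set of answer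
sets of `B ∪ C_e ∪ H`; `pi e` is the partial interpretation of example `e`;
`Pos`, `Neg` are the positive and negative examples and `Ob`, `Oc` the brave and
cautious orderings; `prec` is the dominance relation `≺_{B ∪ H}` induced by the
weak constraints of `B ∪ H` (contexts contain no weak constraints); `ctx e` is
the fresh identifier atom of example `e`; and `ASt` is the set of answer sets of
the translated background knowledge together with `H`, which by the
combining-contexts lemma equals `⋃ e, {A ∪ {ctx e} | A ∈ AS e}`. -/
theorem translation_correct {α ι : Type*}
    (AS : ι → Set (Set α)) (pi : ι → PInterp α)
    (Pos Neg : Set ι) (Ob Oc : Set (ι × ι))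
    (prec : Set α → Set α → Prop)
    (ctx : ι → α) (hinj : Function.Injective ctx)
    -- freshness of the ctx atoms:
    (hfresh_inc : ∀ e e' : ι, ctx e' ∉ (pi e).inc)
    (hfresh_exc : ∀ e e' : ι, ctx e' ∉ (pi e).exc)
    (hfresh_as : ∀ (e : ι), ∀ A ∈ AS e, ∀ e' : ι, ctx e' ∉ A)
    -- the fresh atoms do not affect dominance (they occur in no weak constraint):
    (hprec : ∀ (A₁ A₂ : Set α) (e₁ e₂ : ι),
      prec (A₁ ∪ {ctx e₁}) (A₂ ∪ {ctx e₂}) ↔ prec A₁ A₂)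
    -- combining-contexts lemma for the translated background knowledge:
    (ASt : Set (Set α))
    (hASt : ASt = ⋃ e : ι, (fun A => A ∪ {ctx e}) '' AS e) :
    -- translated partial interpretation of example e:
    (let cpi : ι → PInterp α := fun e => ⟨(pi e).inc ∪ {ctx e}, (pi e).exc⟩
    -- H is a solution of the context-dependent task T ...
    ((∀ e ∈ Pos, ∃ A ∈ AS e, Extends A (pi e)) ∧
     (∀ e ∈ Neg, ¬ ∃ A ∈ AS e, Extends A (pi e)) ∧
     (∀ o ∈ Ob, ∃ A₁ ∈ AS o.1, ∃ A₂ ∈ AS o.2,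
        Extends A₁ (pi o.1) ∧ Extends A₂ (pi o.2) ∧ prec A₁ A₂) ∧
     (∀ o ∈ Oc, ∀ A₁ ∈ AS o.1, ∀ A₂ ∈ AS o.2,
        Extends A₁ (pi o.1) → Extends A₂ (pi o.2) → prec A₁ A₂))
    -- ... iff H is a solution of the translated task 𝒯_LOAS(T):
    ↔
    ((∀ e ∈ Pos, ∃ A ∈ ASt, Extends A (cpi e)) ∧
     (∀ e ∈ Neg, ¬ ∃ A ∈ ASt, Extends A (cpi e)) ∧
     (∀ o ∈ Ob, ∃ A₁ ∈ ASt, ∃ A₂ ∈ ASt,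
        Extends A₁ (cpi o.1) ∧ Extends A₂ (cpi o.2) ∧ prec A₁ A₂) ∧
     (∀ o ∈ Oc, ∀ A₁ ∈ ASt, ∀ A₂ ∈ ASt,
        Extends A₁ (cpi o.1) → Extends A₂ (cpi o.2) → prec A₁ A₂))) := by

  subst hASt
  intro cpi
  have key : ∀ (e : ι) (A' : Set α),
      (A' ∈ ⋃ e : ι, (fun A => A ∪ {ctx e}) '' AS e ∧ Extends A' (cpi e)) ↔
      ∃ A ∈ AS e, Extends A (pi e) ∧ A' = A ∪ {ctx e} := by
    intro e A'
    constructor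
    · rintro ⟨hmem, hext⟩
      rw [Set.mem_iUnion] at hmem
      obtain ⟨e', A, hA, rfl⟩ := hmem
      have hctx : ctx e ∈ A ∪ {ctx e'} := hext.1 (Or.inr rfl)
      have he : e' = e := by
        rcases hctx with h | h
        · exact absurd h (hfresh_as e' A hA e)
        · exact hinj (Set.mem_singleton_iff.1 h).symm
      subst he
      refine ⟨A, hA, ⟨?_, ?_⟩, rfl⟩
      · intro x hx
        rcases hext.1 (Or.inl hx) with h | h
        · exact h
        · exact absurd (h ▸ hx) (hfresh_inc _ _)
      · have := hext.2
        rw [Set.eq_empty_iff_forall_notMem] at this ⊢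
        intro x hx
        exact this x ⟨hx.1, Or.inl hx.2⟩
    · rintro ⟨A, hA, hext, rfl⟩
      refine ⟨Set.mem_iUnion.2 ⟨e, A, hA, rfl⟩, ?_, ?_⟩
      · rintro x (hx | hx)
        · exact Or.inl (hext.1 hx)
        · exact Or.inr hx
      · rw [Set.eq_empty_iff_forall_notMem]
        rintro x ⟨hx1, hx2 | hx2⟩
        · exact Set.eq_empty_iff_forall_notMem.1 hext.2 x ⟨hx1, hx2⟩
        · exact hfresh_exc _ _ (hx2 ▸ hx1)
  constructor
  · rintro ⟨hP, hN, hB, hC⟩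
    refine ⟨?_, ?_, ?_, ?_⟩
    · intro e he
      obtain ⟨A, hA, hext⟩ := hP e he
      exact ⟨A ∪ {ctx e}, ((key e _).2 ⟨A, hA, hext, rfl⟩).1,
        ((key e _).2 ⟨A, hA, hext, rfl⟩).2⟩
    · rintro e he ⟨A', hA', hext⟩
      obtain ⟨A, hA, hext2, rfl⟩ := (key e A').1 ⟨hA', hext⟩
      exact hN e he ⟨A, hA, hext2⟩
    · intro o ho
      obtain ⟨A₁, h1, A₂, h2, he1, he2, hp⟩ := hB o ho
      refine ⟨A₁ ∪ {ctx o.1}, ((key o.1 _).2 ⟨A₁, h1, he1, rfl⟩).1,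
        A₂ ∪ {ctx o.2}, ((key o.2 _).2 ⟨A₂, h2, he2, rfl⟩).1,
        ((key o.1 _).2 ⟨A₁, h1, he1, rfl⟩).2,
        ((key o.2 _).2 ⟨A₂, h2, he2, rfl⟩).2,
        (hprec A₁ A₂ o.1 o.2).2 hp⟩
    · intro o ho A₁' h1 A₂' h2 he1 he2
      obtain ⟨A₁, hA1, hx1, rfl⟩ := (key o.1 A₁').1 ⟨h1, he1⟩
      obtain ⟨A₂, hA2, hx2, rfl⟩ := (key o.2 A₂').1 ⟨h2, he2⟩
      exact (hprec A₁ A₂ o.1 o.2).2 (hC o ho A₁ hA1 A₂ hA2 hx1 hx2)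
  · rintro ⟨hP, hN, hB, hC⟩
    refine ⟨?_, ?_, ?_, ?_⟩
    · intro e he
      obtain ⟨A', hA', hext⟩ := hP e he
      obtain ⟨A, hA, hext2, rfl⟩ := (key e A').1 ⟨hA', hext⟩
      exact ⟨A, hA, hext2⟩
    · rintro e he ⟨A, hA, hext⟩
      exact hN e he ⟨A ∪ {ctx e}, ((key e _).2 ⟨A, hA, hext, rfl⟩).1,
        ((key e _).2 ⟨A, hA, hext, rfl⟩).2⟩
    · intro o ho
      obtain ⟨A₁', h1, A₂', h2, he1, he2, hp⟩ := hB o ho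
      obtain ⟨A₁, hA1, hx1, rfl⟩ := (key o.1 A₁').1 ⟨h1, he1⟩
      obtain ⟨A₂, hA2, hx2, rfl⟩ := (key o.2 A₂').1 ⟨h2, he2⟩
      exact ⟨A₁, hA1, A₂, hA2, hx1, hx2, (hprec A₁ A₂ o.1 o.2).1 hp⟩
    · intro o ho A₁ hA1 A₂ hA2 he1 he2
      exact (hprec A₁ A₂ o.1 o.2).1
        (hC o ho (A₁ ∪ {ctx o.1}) ((key o.1 _).2 ⟨A₁, hA1, he1, rfl⟩).1
          (A₂ ∪ {ctx o.2}) ((key o.2 _).2 ⟨A₂, hA2, he2, rfl⟩).1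
          ((key o.1 _).2 ⟨A₁, hA1, he1, rfl⟩).2
          ((key o.2 _).2 ⟨A₂, hA2, he2, rfl⟩).2)
end
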